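/- Let Ω be a symmetric positive definite p×p matrix and Ψ a symmetric matrix such that Ω² − Ω^{1/2} Ψ Ω^{1/2} is positive definite. If a random vector ξ has mean zero and covariance Ω − Ψ, then the transformed vector ξᶜ = ξ Ω^{1/2} (Ω² − Ω^{1/2} Ψ Ω^{1/2})^{-1/2} Ω^{1/2} has mean zero and covariance exactly Ω. -/

import Mathlib

open MeasureTheory Matrix

open scoped ComplexOrder in
/-- The positive semidefinite square root of a positive semidefinite matrix
(the definition removed from Mathlib, restored verbatim). -/
noncomputable def Matrix.PosSemidef.sqrt {n : Type*} {𝕜 : Type*} [Fintype n] [RCLike 𝕜]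
    [DecidableEq n] {A : Matrix n n 𝕜} (hA : Matrix.PosSemidef A) : Matrix n n 𝕜 :=
  hA.1.eigenvectorUnitary.1 * Matrix.diagonal ((↑) ∘ (√·) ∘ hA.1.eigenvalues) *
  (star hA.1.eigenvectorUnitary : Matrix n n 𝕜)

open scoped ComplexOrder in
lemma Matrix.PosSemidef.posSemidef_sqrt {n : Type*} {𝕜 : Type*} [Fintype n] [RCLike 𝕜]
    [DecidableEq n] {A : Matrix n n 𝕜} (hA : Matrix.PosSemidef A) : hA.sqrt.PosSemidef := by
  unfold Matrix.PosSemidef.sqrt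
  rw [star_eq_conjTranspose]
  refine Matrix.PosSemidef.mul_mul_conjTranspose_same ?_ _
  rw [posSemidef_diagonal_iff]
  intro i
  simp only [Function.comp_apply, RCLike.ofReal_nonneg]
  exact Real.sqrt_nonneg _

open scoped ComplexOrder in
lemma Matrix.PosSemidef.sqrt_mul_self {n : Type*} {𝕜 : Type*} [Fintype n] [RCLike 𝕜]
    [DecidableEq n] {A : Matrix n n 𝕜} (hA : Matrix.PosSemidef A) : hA.sqrt * hA.sqrt = A := by
  unfold Matrix.PosSemidef.sqrt
  conv_rhs => rw [hA.1.spectral_theorem, Unitary.conjStarAlgAut_apply]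
  have hU : (star hA.1.eigenvectorUnitary : Matrix n n 𝕜) * hA.1.eigenvectorUnitary.1 = 1 :=
    Unitary.star_mul_self_of_mem hA.1.eigenvectorUnitary.2
  have hD : Matrix.diagonal (((↑) ∘ (√·) ∘ hA.1.eigenvalues) : n → 𝕜) *
      Matrix.diagonal ((↑) ∘ (√·) ∘ hA.1.eigenvalues) =
      Matrix.diagonal (RCLike.ofReal ∘ hA.1.eigenvalues) := by
    rw [diagonal_mul_diagonal]
    congr 1
    funext i
    simp only [Function.comp_apply]
    rw [← RCLike.ofReal_mul, Real.mul_self_sqrt (hA.eigenvalues_nonneg i)]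
  calc _ = hA.1.eigenvectorUnitary.1 * Matrix.diagonal (((↑) ∘ (√·) ∘ hA.1.eigenvalues) : n → 𝕜) *
        ((star hA.1.eigenvectorUnitary : Matrix n n 𝕜) * hA.1.eigenvectorUnitary.1) *
        Matrix.diagonal ((↑) ∘ (√·) ∘ hA.1.eigenvalues) *
        (star hA.1.eigenvectorUnitary : Matrix n n 𝕜) := by simp only [Matrix.mul_assoc]
    _ = _ := by rw [hU, Matrix.mul_one, Matrix.mul_assoc _ (diagonal _) (diagonal _), hD]

lemma aux_matrix_identity {p : ℕ} (Om Psi : Matrix (Fin p) (Fin p) ℝ)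
    (hOm : Om.PosDef) (H : Matrix (Fin p) (Fin p) ℝ)
    (hHdef : H = Om * Om - hOm.posSemidef.sqrt * Psi * hOm.posSemidef.sqrt)
    (hH : H.PosDef) :
    let S := hOm.posSemidef.sqrt
    let A := S * (hH.posSemidef.sqrt)⁻¹ * S
    Aᵀ * (Om - Psi) * A = Om := by
  intro S A
  set T := hH.posSemidef.sqrt with hT
  have hTT : T * T = H := hH.posSemidef.sqrt_mul_self
  have hSS : S * S = Om := hOm.posSemidef.sqrt_mul_self
  have hSsymm : Sᵀ = S := by
    have := hOm.posSemidef.posSemidef_sqrt.1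
    simpa [Matrix.IsHermitian, Matrix.conjTranspose_eq_transpose_of_trivial] using this
  have hTsymm : Tᵀ = T := by
    have := hH.posSemidef.posSemidef_sqrt.1
    simpa [Matrix.IsHermitian, Matrix.conjTranspose_eq_transpose_of_trivial] using this
  have hTdet : IsUnit T.det := by
    have : T.det * T.det = H.det := by rw [← Matrix.det_mul, hTT]
    have hHdet : H.det ≠ 0 := hH.det_pos.ne'
    have : T.det ≠ 0 := fun h => hHdet (by rw [← this, h, zero_mul])
    exact isUnit_iff_ne_zero.mpr this
  have hAT : Aᵀ = A := by
    simp only [A, ← hT, Matrix.transpose_mul, Matrix.transpose_nonsing_inv, hSsymm, hTsymm,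
      Matrix.mul_assoc]
  rw [hAT]
  have h1 : S * Om * S = Om * Om := by
    conv_lhs => rw [← hSS]
    conv_rhs => rw [← hSS]
    noncomm_ring
  have hmid : S * (Om - Psi) * S = H := by
    rw [hHdef, Matrix.mul_sub, Matrix.sub_mul, h1]
  calc A * (Om - Psi) * A
      = S * T⁻¹ * (S * (Om - Psi) * S) * T⁻¹ * S := by
        simp only [A, ← hT, Matrix.mul_assoc]
    _ = S * T⁻¹ * H * T⁻¹ * S := by rw [hmid]
    _ = Om := by
        rw [← hTT, ← hSS]
        simp only [Matrix.mul_assoc]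
        rw [← Matrix.mul_assoc T⁻¹ T, Matrix.nonsing_inv_mul T hTdet, Matrix.one_mul,
          ← Matrix.mul_assoc T, Matrix.mul_nonsing_inv T hTdet, Matrix.one_mul]

/-- Let `Ω` be symmetric positive definite and `Ψ` symmetric with
`H = Ω² − Ω^{1/2} Ψ Ω^{1/2}` positive definite. If the random row vector `ξ` has mean zero
and covariance `Ω − Ψ`, then `ξᶜ = ξ Ω^{1/2} H^{-1/2} Ω^{1/2}` has mean zero and
covariance exactly `Ω`. -/
theorem corrected_residuals_covariance {p : ℕ} {α : Type*} [MeasurableSpace α]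
    (μm : Measure α) [IsProbabilityMeasure μm]
    (Om Psi : Matrix (Fin p) (Fin p) ℝ)
    (hOm : Om.PosDef) (hPsi : Psi.IsSymm)
    (H : Matrix (Fin p) (Fin p) ℝ)
    (hHdef : H = Om * Om - hOm.posSemidef.sqrt * Psi * hOm.posSemidef.sqrt)
    (hH : H.PosDef)
    (hOmPsi : (Om - Psi).PosSemidef)
    (ξ : α → Matrix (Fin 1) (Fin p) ℝ)
    (ξc : α → Matrix (Fin 1) (Fin p) ℝ)
    (hξc : ∀ ω, ξc ω = ξ ω * hOm.posSemidef.sqrt * (hH.posSemidef.sqrt)⁻¹ * hOm.posSemidef.sqrt)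
    (hint : ∀ j, Integrable (fun ω => ξ ω 0 j) μm)
    (hintV : ∀ (i j : Fin p), Integrable (fun ω => ((ξ ω)ᵀ * ξ ω) i j) μm)
    (hmean : ∀ j, ∫ ω, ξ ω 0 j ∂μm = 0)
    (hcov : ∀ i j, ∫ ω, ((ξ ω)ᵀ * ξ ω) i j ∂μm = (Om - Psi) i j) :
    (∀ j, ∫ ω, ξc ω 0 j ∂μm = 0) ∧
      (∀ i j, ∫ ω, ((ξc ω)ᵀ * ξc ω) i j ∂μm = Om i j) := by
  set S := hOm.posSemidef.sqrt with hS
  set A : Matrix (Fin p) (Fin p) ℝ := S * (hH.posSemidef.sqrt)⁻¹ * S with hA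
  have hAid : Aᵀ * (Om - Psi) * A = Om := aux_matrix_identity Om Psi hOm H hHdef hH
  have hξcA : ∀ ω, ξc ω = ξ ω * A := by
    intro ω; rw [hξc ω, hA, Matrix.mul_assoc, Matrix.mul_assoc, Matrix.mul_assoc]
  constructor
  · intro j
    have hent : ∀ ω, ξc ω 0 j = ∑ k, ξ ω 0 k * A k j := by
      intro ω; rw [hξcA ω, Matrix.mul_apply]
    simp_rw [hent]
    rw [integral_finset_sum _ (fun k _ => (hint k).mul_const (A k j))]
    simp [integral_mul_const, hmean]
  · intro i j
    have hent : ∀ ω, ((ξc ω)ᵀ * ξc ω) i j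
        = ∑ l, ∑ k, Aᵀ i k * ((ξ ω)ᵀ * ξ ω) k l * A l j := by
      intro ω
      rw [hξcA ω, Matrix.transpose_mul, Matrix.mul_assoc, ← Matrix.mul_assoc ((ξ ω)ᵀ),
        ← Matrix.mul_assoc Aᵀ]
      rw [Matrix.mul_apply]
      refine Finset.sum_congr rfl fun l _ => ?_
      rw [Matrix.mul_apply, Finset.sum_mul]
    simp_rw [hent]
    rw [integral_finset_sum _ (fun l _ => integrable_finset_sum _ fun k _ =>
      ((hintV k l).const_mul (Aᵀ i k)).mul_const (A l j))]
    have : ∀ l ∈ Finset.univ, (∫ ω, ∑ k, Aᵀ i k * ((ξ ω)ᵀ * ξ ω) k l * A l j ∂μm)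
        = ∑ k, Aᵀ i k * (Om - Psi) k l * A l j := by
      intro l _
      rw [integral_finset_sum _ (fun k _ => ((hintV k l).const_mul (Aᵀ i k)).mul_const (A l j))]
      refine Finset.sum_congr rfl fun k _ => ?_
      rw [integral_mul_const, integral_const_mul, hcov]
    rw [Finset.sum_congr rfl this]
    have hsum : ∑ l, ∑ k, Aᵀ i k * (Om - Psi) k l * A l j = (Aᵀ * (Om - Psi) * A) i j := by
      rw [Matrix.mul_apply]
      refine Finset.sum_congr rfl fun l _ => ?_
      rw [Matrix.mul_apply, Finset.sum_mul]
    rw [hsum, hAid]
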